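/- Let Γ, Λ be finite dimensional algebras and N a Γ-Λ-bimodule that is projective as a right Λ-module. Let U be a finitely generated Gorenstein projective left Λ-module with complete resolution Q^• and cycle modules U^i = ker(∂^i). If N ⊗_Λ U^i ∈ ^⊥Γ for all i ∈ ℤ and each N ⊗_Λ Q^i is a projective left Γ-module, then N ⊗_Λ U is a Gorenstein projective left Γ-module. -/

import Mathlib

noncomputable section

open scoped TensorProduct
open MulOpposite

section BTensorCore

variable (B : Type) [Ring B]

/-- The balancing relations for the tensor product over `B` of a right `B`-module `M`
and a left `B`-module `N`. -/
def BTrel (M N : Type) [AddCommGroup M] [AddCommGroup N] [Module Bᵐᵒᵖ M] [Module B N] :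
    Submodule ℤ (TensorProduct ℤ M N) :=
  Submodule.span ℤ {x | ∃ (m : M) (b : B) (n : N),
    x = (op b • m) ⊗ₜ[ℤ] n - m ⊗ₜ[ℤ] (b • n)}

/-- The balanced tensor product `M ⊗_B N` of a right `B`-module `M` and a left `B`-module `N`,
realized as a quotient of the tensor product of abelian groups. -/
def BTensor (M N : Type) [AddCommGroup M] [AddCommGroup N] [Module Bᵐᵒᵖ M] [Module B N] : Type :=
  TensorProduct ℤ M N ⧸ BTrel B M N

instance (M N : Type) [AddCommGroup M] [AddCommGroup N] [Module Bᵐᵒᵖ M] [Module B N] :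
    AddCommGroup (BTensor B M N) :=
  inferInstanceAs (AddCommGroup (TensorProduct ℤ M N ⧸ BTrel B M N))

variable {M N : Type} [AddCommGroup M] [AddCommGroup N] [Module Bᵐᵒᵖ M] [Module B N]

/-- The class of `m ⊗ n` in `M ⊗_B N`. -/
def BTensor.tmul (m : M) (n : N) : BTensor B M N :=
  Submodule.Quotient.mk (m ⊗ₜ[ℤ] n)

/-- Functoriality of `M ⊗_B -` in the second (left-module) variable. -/
def BTensor.map₂ (Mfix : Type) [AddCommGroup Mfix] [Module Bᵐᵒᵖ Mfix]
    {N' : Type} [AddCommGroup N'] [Module B N'] (f : N →ₗ[B] N') :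
    BTensor B Mfix N →ₗ[ℤ] BTensor B Mfix N' :=
  Submodule.mapQ _ _ (TensorProduct.map LinearMap.id f.toAddMonoidHom.toIntLinearMap) (by
    intro x hx
    induction hx using Submodule.span_induction with
    | mem x h =>
      obtain ⟨m, b, n, rfl⟩ := h
      show _ ∈ BTrel B Mfix N'
      have := Submodule.subset_span (R := ℤ)
        (s := {x : Mfix ⊗[ℤ] N' | ∃ (m : Mfix) (b : B) (n : N'),
          x = (op b • m) ⊗ₜ[ℤ] n - m ⊗ₜ[ℤ] (b • n)}) ⟨m, b, f n, rfl⟩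
      have e : TensorProduct.map LinearMap.id f.toAddMonoidHom.toIntLinearMap
          ((op b • m) ⊗ₜ[ℤ] n - m ⊗ₜ[ℤ] (b • n)) = (op b • m) ⊗ₜ[ℤ] f n - m ⊗ₜ[ℤ] (b • f n) := by
        simp [map_sub, TensorProduct.map_tmul]
      have h2 : (op b • m) ⊗ₜ[ℤ] f n - m ⊗ₜ[ℤ] (b • f n) ∈ BTrel B Mfix N' := this
      rw [← e] at h2
      exact h2
    | zero => exact Submodule.zero_mem _
    | add x y _ _ hx hy => exact Submodule.add_mem _ hx hy
    | smul a x _ hx => exact Submodule.smul_mem _ a hx)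

/-- Functoriality of `- ⊗_B N` in the first (right-module) variable. -/
def BTensor.map₁ (Nfix : Type) [AddCommGroup Nfix] [Module B Nfix]
    {M' : Type} [AddCommGroup M'] [Module Bᵐᵒᵖ M'] (g : M →ₗ[Bᵐᵒᵖ] M') :
    BTensor B M Nfix →ₗ[ℤ] BTensor B M' Nfix :=
  Submodule.mapQ _ _ (TensorProduct.map g.toAddMonoidHom.toIntLinearMap LinearMap.id) (by
    intro x hx
    induction hx using Submodule.span_induction with
    | mem x h =>
      obtain ⟨m, b, n, rfl⟩ := h
      show _ ∈ BTrel B M' Nfix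
      have := Submodule.subset_span (R := ℤ)
        (s := {x : M' ⊗[ℤ] Nfix | ∃ (m : M') (b : B) (n : Nfix),
          x = (op b • m) ⊗ₜ[ℤ] n - m ⊗ₜ[ℤ] (b • n)}) ⟨g m, b, n, rfl⟩
      have e : TensorProduct.map g.toAddMonoidHom.toIntLinearMap LinearMap.id
          ((op b • m) ⊗ₜ[ℤ] n - m ⊗ₜ[ℤ] (b • n)) = (op b • g m) ⊗ₜ[ℤ] n - g m ⊗ₜ[ℤ] (b • n) := by
        simp [map_sub, TensorProduct.map_tmul]
      have h2 : (op b • g m) ⊗ₜ[ℤ] n - g m ⊗ₜ[ℤ] (b • n) ∈ BTrel B M' Nfix := this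
      rw [← e] at h2
      exact h2
    | zero => exact Submodule.zero_mem _
    | add x y _ _ hx hy => exact Submodule.add_mem _ hx hy
    | smul a x _ hx => exact Submodule.smul_mem _ a hx)

theorem BTensor.map₂_mk (Mfix : Type) [AddCommGroup Mfix] [Module Bᵐᵒᵖ Mfix]
    {N' : Type} [AddCommGroup N'] [Module B N'] (f : N →ₗ[B] N') (y : Mfix ⊗[ℤ] N) :
    BTensor.map₂ B Mfix f (Submodule.Quotient.mk y) =
      Submodule.Quotient.mk
        (TensorProduct.map LinearMap.id f.toAddMonoidHom.toIntLinearMap y) :=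
  by rfl

theorem BTensor.map₁_mk (Nfix : Type) [AddCommGroup Nfix] [Module B Nfix]
    {M' : Type} [AddCommGroup M'] [Module Bᵐᵒᵖ M'] (g : M →ₗ[Bᵐᵒᵖ] M') (y : M ⊗[ℤ] Nfix) :
    BTensor.map₁ B Nfix g (Submodule.Quotient.mk y) =
      Submodule.Quotient.mk
        (TensorProduct.map g.toAddMonoidHom.toIntLinearMap LinearMap.id y) :=
  by rfl

end BTensorCore

section LeftRight

variable (B : Type) [Ring B] (Γ : Type) [Ring Γ]
variable (M N : Type) [AddCommGroup M] [AddCommGroup N] [Module Bᵐᵒᵖ M] [Module B N]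

section Left
variable [Module Γ M] [SMulCommClass Γ Bᵐᵒᵖ M]

/-- left scalar multiplication on `M`, as a right-`B`-linear map. -/
def lsmulRightLinear (g : Γ) : M →ₗ[Bᵐᵒᵖ] M where
  toFun := (g • ·)
  map_add' := smul_add g
  map_smul' := fun b m => by exact smul_comm g b m

instance BTensor.instSMulLeft : SMul Γ (BTensor B M N) :=
  ⟨fun g => BTensor.map₁ B N (lsmulRightLinear B Γ M g)⟩

instance BTensor.leftModule : Module Γ (BTensor B M N) := by
  refine Function.Surjective.module Γ
    (⟨⟨(Submodule.Quotient.mk : TensorProduct ℤ M N → BTensor B M N), rfl⟩, fun x y => rfl⟩)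
    (Submodule.Quotient.mk_surjective _) ?_
  intro g y
  show Submodule.Quotient.mk (g • y) = BTensor.map₁ B N (lsmulRightLinear B Γ M g)
    (Submodule.Quotient.mk y)
  rw [BTensor.map₁_mk]
  congr 1

end Left

section Right
variable [Module Γᵐᵒᵖ N] [SMulCommClass B Γᵐᵒᵖ N]

/-- right scalar multiplication on `N`, as a left-`B`-linear map. -/
def rsmulLeftLinear (g : Γᵐᵒᵖ) : N →ₗ[B] N where
  toFun := (g • ·)
  map_add' := smul_add g
  map_smul' := fun b n => by exact (smul_comm b g n).symm

instance BTensor.instSMulRight : SMul Γᵐᵒᵖ (BTensor B M N) :=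
  ⟨fun g => BTensor.map₂ B M (rsmulLeftLinear B Γ N g)⟩

instance BTensor.rightModule : Module Γᵐᵒᵖ (BTensor B M N) := by
  refine Function.Surjective.module Γᵐᵒᵖ
    (⟨⟨fun (y : N ⊗[ℤ] M) => (Submodule.Quotient.mk (TensorProduct.comm ℤ N M y) :
        BTensor B M N), by simp; rfl⟩, fun x y => by simp; rfl⟩) ?_ ?_
  · intro x
    obtain ⟨y, rfl⟩ := Submodule.Quotient.mk_surjective _ x
    exact ⟨(TensorProduct.comm ℤ N M).symm y, by
      show Submodule.Quotient.mk (TensorProduct.comm ℤ N M ((TensorProduct.comm ℤ N M).symm y)) = _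
      rw [LinearEquiv.apply_symm_apply]⟩
  · intro g y
    show Submodule.Quotient.mk ((TensorProduct.comm ℤ N M) (g • y)) =
      BTensor.map₂ B M (rsmulLeftLinear B Γ N g)
        (Submodule.Quotient.mk ((TensorProduct.comm ℤ N M) y))
    rw [BTensor.map₂_mk]
    congr 1
    induction y using TensorProduct.induction_on with
    | zero => simp
    | tmul n m =>
        simp [TensorProduct.smul_tmul', rsmulLeftLinear, TensorProduct.comm_tmul]
    | add x y hx hy => simp [smul_add, hx, hy]

end Right

instance BTensor.smulCommClass [Module Γ M] [SMulCommClass Γ Bᵐᵒᵖ M]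
    [Module Γᵐᵒᵖ N] [SMulCommClass B Γᵐᵒᵖ N] :
    SMulCommClass Γ Γᵐᵒᵖ (BTensor B M N) := by
  constructor
  intro g og x
  obtain ⟨y, rfl⟩ := Submodule.Quotient.mk_surjective _ x
  show (BTensor.map₁ B N (lsmulRightLinear B Γ M g)) ((BTensor.map₂ B M (rsmulLeftLinear B Γ N og)) _)
    = (BTensor.map₂ B M (rsmulLeftLinear B Γ N og)) ((BTensor.map₁ B N (lsmulRightLinear B Γ M g)) _)
  rw [BTensor.map₂_mk, BTensor.map₁_mk, BTensor.map₁_mk, BTensor.map₂_mk]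
  congr 1
  induction y using TensorProduct.induction_on with
  | zero => simp
  | tmul m n => simp [lsmulRightLinear, rsmulLeftLinear]
  | add x y hx hy => simp [hx, hy]

end LeftRight

section Bimod

variable (B : Type) [Ring B]

/-- A `B`-`B`-bimodule, packaged. -/
structure BBimod : Type 1 where
  X : Type
  [addcg : AddCommGroup X]
  [left : Module B X]
  [right : Module Bᵐᵒᵖ X]
  [comm : SMulCommClass B Bᵐᵒᵖ X]

attribute [instance] BBimod.addcg BBimod.left BBimod.right BBimod.comm

variable {B}

/-- tensor product of bimodules over `B`. -/
def BBimod.tensor (M N : BBimod B) : BBimod B where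
  X := BTensor B M.X N.X

/-- `M.pow j` is the tensor power `M^{⊗_B (j+1)}`. -/
def BBimod.pow (M : BBimod B) : ℕ → BBimod B
  | 0 => M
  | (j + 1) => M.tensor (M.pow j)

end Bimod

section Tor

variable (R : Type) [Ring R]

/-- `P`, `d`, `ε` form a projective resolution of the left `R`-module `N`. -/
def IsProjResolution (N : Type) [AddCommGroup N] [Module R N]
    (P : ℕ → ModuleCat R) (d : ∀ i, P (i + 1) ⟶ P i) (ε : P 0 ⟶ ModuleCat.of R N) : Prop :=
  (∀ i, Module.Projective R (P i)) ∧ Function.Surjective ε ∧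
    LinearMap.range (d 0).hom = LinearMap.ker ε.hom ∧
    ∀ i, LinearMap.range (d (i + 1)).hom = LinearMap.ker (d i).hom

/-- `Tor_i^R(M, N) = 0` for all `i ≥ 1`: for every projective resolution `P⬝` of `N`, the
complex `M ⊗_R P⬝` is exact in all positive degrees. -/
def TorVanishesPos (M : Type) [AddCommGroup M] [Module Rᵐᵒᵖ M]
    (N : Type) [AddCommGroup N] [Module R N] : Prop :=
  ∀ (P : ℕ → ModuleCat R) (d : ∀ i, P (i + 1) ⟶ P i) (ε : P 0 ⟶ ModuleCat.of R N),
    IsProjResolution R N P d ε →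
    ∀ i, LinearMap.range (BTensor.map₂ R M (d (i + 1)).hom) =
      LinearMap.ker (BTensor.map₂ R M (d i).hom)

end Tor

section ExtGp

variable (R : Type) [Ring R]

/-- `Ext_R^{i+1}(U, Y) = 0`: for every projective resolution of `U`, the induced complex of
`Hom` groups is exact at the spot computing `Ext^{i+1}`. -/
def ExtVanishSucc (U : Type) [AddCommGroup U] [Module R U]
    (Y : Type) [AddCommGroup Y] [Module R Y] (i : ℕ) : Prop :=
  ∀ (P : ℕ → ModuleCat R) (d : ∀ n, P (n + 1) ⟶ P n) (ε : P 0 ⟶ ModuleCat.of R U),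
    IsProjResolution R U P d ε →
    ∀ g : P (i + 1) →ₗ[R] Y, g.comp (d (i + 1)).hom = 0 →
      ∃ h : P i →ₗ[R] Y, h.comp (d i).hom = g

/-- `U` is a Gorenstein projective `R`-module: it is (isomorphic to) a cycle module of a
complete projective resolution, i.e. an exact complex of projectives which stays exact
under `Hom_R(-, R)`. -/
def IsGorensteinProj (U : Type) [AddCommGroup U] [Module R U] : Prop :=
  ∃ (P : ℤ → ModuleCat.{0} R) (d : ∀ i, P i ⟶ P (i + 1)),
    (∀ i, Module.Projective R (P i)) ∧
    (∀ i, LinearMap.range (d i).hom = LinearMap.ker (d (i + 1)).hom) ∧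
    (∀ (i : ℤ) (g : P (i + 1) →ₗ[R] R), g.comp (d i).hom = 0 ↔
      ∃ h : P (i + 1 + 1) →ₗ[R] R, h.comp (d (i + 1)).hom = g) ∧
    Nonempty (U ≃ₗ[R] LinearMap.ker (d 0).hom)

/-- `Y ∈ Gproj(R)^⊥`: `Ext_R^i(U, Y) = 0` for every finitely generated Gorenstein
projective `U` and every `i ≥ 1`. -/
def MemGprojPerp (Y : Type) [AddCommGroup Y] [Module R Y] : Prop :=
  ∀ (U : Type) [AddCommGroup U] [Module R U], Module.Finite R U → IsGorensteinProj R U →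
    ∀ i : ℕ, ExtVanishSucc R U Y i

/-- `X ∈ ^⊥R`: `Ext_R^i(X, R) = 0` for all `i ≥ 1`. -/
def MemPerpRing (X : Type) [AddCommGroup X] [Module R X] : Prop :=
  ∀ i : ℕ, ExtVanishSucc R X R i

/-- projective dimension at most `n`. -/
def pdLE : ℕ → ModuleCat R → Prop
  | 0, M => Module.Projective R M
  | (n + 1), M => ∃ (P : ModuleCat R) (f : P ⟶ M),
      Module.Projective R P ∧ Function.Surjective f ∧ pdLE n (ModuleCat.of R (LinearMap.ker f.hom))

/-- `M` has finite projective dimension over `R`. -/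
def HasFinProjDim (M : Type) [AddCommGroup M] [Module R M] : Prop :=
  ∃ n, pdLE R n (ModuleCat.of R M)

end ExtGp

/-! Since `N` is projective as a right `Λ`-module, it is a retract of a free module
`ι →₀ Λ`, and `(ι →₀ Λ) ⊗_Λ -` is naturally `ι →₀ -`; so `N ⊗_Λ -` is exact. Hence `N ⊗_Λ Q⬝`
is an exact complex of projective `Γ`-modules with cycle modules `N ⊗_Λ U^i`, the one in
degree `0` being `N ⊗_Λ U`. It stays exact under `Hom_Γ(-, Γ)`: the truncation
`⋯ → N ⊗_Λ Q^i → N ⊗_Λ Q^(i+1) → N ⊗_Λ Q^(i+2)` is a projective resolution of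
`N ⊗_Λ U^(i+3)`, so a map on `N ⊗_Λ Q^(i+1)` killing the image of `N ⊗_Λ Q^i` extends over
`N ⊗_Λ Q^(i+2)` because `Ext¹_Γ(N ⊗_Λ U^(i+3), Γ) = 0`. -/

theorem Finsupp.exact_mapRange_linearMap {R ι M M' M'' : Type*} [Ring R]
    [AddCommGroup M] [Module R M] [AddCommGroup M'] [Module R M'] [AddCommGroup M'']
    [Module R M''] {f : M →ₗ[R] M'} {g : M' →ₗ[R] M''} (h : Function.Exact f g) :
    Function.Exact (Finsupp.mapRange.linearMap (α := ι) f) (Finsupp.mapRange.linearMap g) := by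
  classical
  refine LinearMap.exact_of_comp_of_mem_range ?_ fun x hx => ?_
  · rw [← Finsupp.mapRange.linearMap_comp, h.linearMap_comp_eq_zero]
    ext
    simp
  · choose s hs using fun i => (h (x i)).1 (by simpa using DFunLike.congr_fun hx i)
    refine ⟨x.support.sum fun i => Finsupp.single i (s i), ?_⟩
    simp only [map_sum, Finsupp.mapRange.linearMap_apply, Finsupp.mapRange_single, hs]
    exact x.sum_single

namespace BTensor

section Functoriality

variable {Λ : Type} [Ring Λ] {N N' N'' : Type} [AddCommGroup N] [Module Λᵐᵒᵖ N]
  [AddCommGroup N'] [Module Λᵐᵒᵖ N'] [AddCommGroup N''] [Module Λᵐᵒᵖ N'']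
  {A B C : Type} [AddCommGroup A] [Module Λ A] [AddCommGroup B] [Module Λ B]
  [AddCommGroup C] [Module Λ C]

theorem hom_ext {X : Type} [AddCommGroup X] {φ ψ : BTensor Λ N A →ₗ[ℤ] X}
    (h : ∀ n a, φ (tmul Λ n a) = ψ (tmul Λ n a)) : φ = ψ :=
  Submodule.linearMap_qext _ (TensorProduct.ext' h)

theorem add_tmul (n n' : N) (a : A) : tmul Λ (n + n') a = tmul Λ n a + tmul Λ n' a :=
  congrArg Submodule.Quotient.mk (TensorProduct.add_tmul n n' a)

theorem zero_tmul (a : A) : tmul Λ (0 : N) a = 0 :=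
  congrArg Submodule.Quotient.mk (TensorProduct.zero_tmul N a)

theorem tmul_zero (n : N) : tmul Λ n (0 : A) = 0 :=
  congrArg Submodule.Quotient.mk (TensorProduct.tmul_zero A n)

theorem tmul_smul (n : N) (b : Λ) (a : A) : tmul Λ n (b • a) = tmul Λ (op b • n) a :=
  ((Submodule.Quotient.eq (BTrel Λ N A)).2 (Submodule.subset_span ⟨n, b, a, rfl⟩)).symm

@[simp]
theorem map₂_tmul (f : A →ₗ[Λ] B) (n : N) (a : A) :
    map₂ Λ N f (tmul Λ n a) = tmul Λ n (f a) :=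
  rfl

theorem map₂_comp (f : A →ₗ[Λ] B) (g : B →ₗ[Λ] C) :
    map₂ Λ N (g ∘ₗ f) = map₂ Λ N g ∘ₗ map₂ Λ N f :=
  hom_ext fun _ _ => rfl

theorem map₂_zero : map₂ Λ N (0 : A →ₗ[Λ] B) = 0 :=
  hom_ext fun n _ => tmul_zero n

theorem map₁_comp (g : N →ₗ[Λᵐᵒᵖ] N') (g' : N' →ₗ[Λᵐᵒᵖ] N'') :
    map₁ Λ A (g' ∘ₗ g) = map₁ Λ A g' ∘ₗ map₁ Λ A g :=
  hom_ext fun _ _ => rfl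

theorem map₁_id : map₁ Λ A (LinearMap.id : N →ₗ[Λᵐᵒᵖ] N) = LinearMap.id :=
  hom_ext fun _ _ => rfl

theorem map₂_comp_map₁ (f : A →ₗ[Λ] B) (g : N →ₗ[Λᵐᵒᵖ] N') :
    map₂ Λ N' f ∘ₗ map₁ Λ A g = map₁ Λ B g ∘ₗ map₂ Λ N f :=
  hom_ext fun _ _ => rfl

theorem map₂_surjective {f : A →ₗ[Λ] B} (hf : Function.Surjective f) :
    Function.Surjective (map₂ Λ N f) := by
  intro x
  obtain ⟨y, rfl⟩ := Submodule.Quotient.mk_surjective _ x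
  obtain ⟨t, rfl⟩ := LinearMap.lTensor_surjective N (g := f.toAddMonoidHom.toIntLinearMap) hf y
  exact ⟨Submodule.Quotient.mk t, rfl⟩

end Functoriality


section Flat

variable {Λ : Type} [Ring Λ] {ι N : Type} [AddCommGroup N] [Module Λᵐᵒᵖ N]
  {A B C : Type} [AddCommGroup A] [Module Λ A] [AddCommGroup B] [Module Λ B]
  [AddCommGroup C] [Module Λ C]

variable (Λ ι A) in
def toFinsupp : BTensor Λ (ι →₀ Λᵐᵒᵖ) A →ₗ[ℤ] (ι →₀ A) :=
  Submodule.liftQ _ (TensorProduct.lift (LinearMap.mk₂ ℤ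
    (fun v a => v.mapRange (fun l => l.unop • a) (zero_smul Λ a))
    (fun _ _ _ => by ext; simp [add_smul])
    (fun _ _ _ => by ext; simp [mul_smul, Int.cast_smul_eq_zsmul, smul_comm _ (_ : ℤ)])
    (fun _ _ _ => by ext; simp)
    (fun _ _ _ => by ext; simp [smul_comm _ (_ : ℤ)]))) (by
      rw [BTrel, Submodule.span_le]
      rintro _ ⟨v, b, a, rfl⟩
      change TensorProduct.lift _ _ = (0 : ι →₀ A)
      rw [map_sub, sub_eq_zero]
      ext i
      simp [mul_smul])

theorem toFinsupp_tmul (v : ι →₀ Λᵐᵒᵖ) (a : A) :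
    toFinsupp Λ ι A (tmul Λ v a) = v.mapRange (fun l => l.unop • a) (zero_smul Λ a) :=
  rfl

variable (Λ ι A) in
def ofFinsupp : (ι →₀ A) →ₗ[ℤ] BTensor Λ (ι →₀ Λᵐᵒᵖ) A :=
  Finsupp.lsum ℤ fun i => (BTrel Λ _ A).mkQ ∘ₗ TensorProduct.mk ℤ _ A (Finsupp.single i 1)

theorem ofFinsupp_single (i : ι) (a : A) :
    ofFinsupp Λ ι A (Finsupp.single i a) = tmul Λ (Finsupp.single i 1) a :=
  Finsupp.lsum_single ℤ _ i a

variable (Λ ι A) in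
def finsuppScalarLeft : BTensor Λ (ι →₀ Λᵐᵒᵖ) A ≃ₗ[ℤ] (ι →₀ A) :=
  LinearEquiv.ofLinearMap (toFinsupp Λ ι A) (ofFinsupp Λ ι A)
    (Finsupp.lhom_ext fun i a => by simp [ofFinsupp_single, toFinsupp_tmul])
    (hom_ext fun v a => by
      rw [LinearMap.comp_apply, toFinsupp_tmul, LinearMap.id_apply]
      induction v using Finsupp.induction_linear with
      | zero => rw [Finsupp.mapRange_zero, map_zero, zero_tmul]
      | add v w hv hw =>
        rw [Finsupp.mapRange_add (fun _ _ => add_smul _ _ a), map_add, hv, hw, add_tmul]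
      | single i l =>
        rw [Finsupp.mapRange_single, ofFinsupp_single, tmul_smul, Finsupp.smul_single, smul_eq_mul,
          mul_one, op_unop])

theorem finsuppScalarLeft_naturality (f : A →ₗ[Λ] B) :
    Finsupp.mapRange.linearMap f.toAddMonoidHom.toIntLinearMap ∘ₗ
        (finsuppScalarLeft Λ ι A).toLinearMap =
      (finsuppScalarLeft Λ ι B).toLinearMap ∘ₗ map₂ Λ (ι →₀ Λᵐᵒᵖ) f :=
  hom_ext fun v a => by
    ext i
    simp [finsuppScalarLeft, toFinsupp_tmul]

theorem exact_map₂_finsupp {f : A →ₗ[Λ] B} {g : B →ₗ[Λ] C} (h : Function.Exact f g) :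
    Function.Exact (map₂ Λ (ι →₀ Λᵐᵒᵖ) f) (map₂ Λ (ι →₀ Λᵐᵒᵖ) g) :=
  (Function.Exact.iff_of_ladder_linearEquiv (finsuppScalarLeft_naturality f)
    (finsuppScalarLeft_naturality g)).1 (Finsupp.exact_mapRange_linearMap h)

theorem exact_map₂_of_projective (hN : Module.Projective Λᵐᵒᵖ N) {f : A →ₗ[Λ] B}
    {g : B →ₗ[Λ] C} (h : Function.Exact f g) :
    Function.Exact (map₂ Λ N f) (map₂ Λ N g) := by
  obtain ⟨s, hs⟩ := Module.projective_def'.1 hN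
  set t := Finsupp.linearCombination Λᵐᵒᵖ (id : N → N)
  have hts (x : BTensor Λ N B) : map₁ Λ B t (map₁ Λ B s x) = x := by
    rw [← LinearMap.comp_apply, ← map₁_comp, hs, map₁_id, LinearMap.id_apply]
  refine LinearMap.exact_of_comp_of_mem_range ?_ fun x hx => ?_
  · rw [← map₂_comp, h.linearMap_comp_eq_zero, map₂_zero]
  · obtain ⟨y, hy⟩ := (exact_map₂_finsupp h (map₁ Λ B s x)).1 <| by
      rw [← LinearMap.comp_apply, map₂_comp_map₁, LinearMap.comp_apply, hx, map_zero]
    refine ⟨map₁ Λ A t y, ?_⟩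
    rw [← LinearMap.comp_apply, map₂_comp_map₁, LinearMap.comp_apply, hy, hts]

theorem map₂_injective_of_projective (hN : Module.Projective Λᵐᵒᵖ N) {f : A →ₗ[Λ] B}
    (hf : Function.Injective f) : Function.Injective (map₂ Λ N f) := by
  have h := exact_map₂_of_projective hN ((LinearMap.exact_zero_iff_injective Unit f).2 hf)
  rwa [map₂_zero, LinearMap.exact_zero_iff_injective] at h

end Flat

section Bimodule

variable {Λ : Type} [Ring Λ] (Γ : Type) [Ring Γ] (N : Type) [AddCommGroup N]
  [Module Λᵐᵒᵖ N] [Module Γ N] [SMulCommClass Γ Λᵐᵒᵖ N]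
  {A B C : Type} [AddCommGroup A] [Module Λ A] [AddCommGroup B] [Module Λ B]
  [AddCommGroup C] [Module Λ C]

def lTensor (f : A →ₗ[Λ] B) : BTensor Λ N A →ₗ[Γ] BTensor Λ N B where
  toFun := map₂ Λ N f
  map_add' := map_add _
  map_smul' γ := LinearMap.congr_fun (map₂_comp_map₁ f (lsmulRightLinear Λ Γ N γ))

variable {Γ N}

theorem exact_lTensor (hN : Module.Projective Λᵐᵒᵖ N) {f : A →ₗ[Λ] B} {g : B →ₗ[Λ] C}
    (h : Function.Exact f g) : Function.Exact (lTensor Γ N f) (lTensor Γ N g) :=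
  exact_map₂_of_projective hN h

theorem lTensor_surjective {f : A →ₗ[Λ] B} (hf : Function.Surjective f) :
    Function.Surjective (lTensor Γ N f) :=
  map₂_surjective hf

def lTensorEquivKer (hN : Module.Projective Λᵐᵒᵖ N) {f : A →ₗ[Λ] B} {g : B →ₗ[Λ] C}
    (hf : Function.Injective f) (h : Function.Exact f g) :
    BTensor Λ N A ≃ₗ[Γ] LinearMap.ker (lTensor Γ N g) :=
  (LinearEquiv.ofInjective (lTensor Γ N f) (map₂_injective_of_projective hN hf)).trans
    (LinearEquiv.ofEq _ _ (LinearMap.exact_iff.1 (exact_lTensor hN h)).symm)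

end Bimodule

end BTensor

section CompleteResolution

open CategoryTheory

variable {R : Type} [Ring R] {P : ℤ → ModuleCat.{0} R} {d : ∀ i, P i ⟶ P (i + 1)}

/-- The indices `i + 1 + 1, i + 1, i, i - 1, …`; the first three cases make the first two
differentials of the resolution below definitionally `d (i + 1)` and `d i`. -/
def descendingIndex (i : ℤ) : ℕ → ℤ
  | 0 => i + 1 + 1
  | 1 => i + 1
  | 2 => i
  | k + 3 => i - (k + 1)

theorem descendingIndex_succ_add_one (i : ℤ) :
    ∀ k, descendingIndex i (k + 1) + 1 = descendingIndex i k
  | 0 | 1 => rfl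
  | 2 => by simp [descendingIndex]
  | k + 3 => by simp only [descendingIndex, Nat.cast_add, Nat.cast_one]; omega

theorem exact_comp_eqToHom (hd : ∀ i, Function.Exact (d i).hom (d (i + 1)).hom) {a b c : ℤ}
    (hab : a + 1 = b) (hbc : b + 1 = c) :
    Function.Exact (d a ≫ eqToHom (congrArg P hab)).hom
      (d b ≫ eqToHom (congrArg P hbc)).hom := by
  subst hab hbc
  simpa using hd a

theorem isProjResolution_descendingIndex (hP : ∀ i, Module.Projective R (P i))
    (hd : ∀ i, Function.Exact (d i).hom (d (i + 1)).hom) {i : ℤ} {X : Type} [AddCommGroup X]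
    [Module R X] (ε : P (i + 1 + 1) →ₗ[R] X) (hε : Function.Surjective ε)
    (hdε : Function.Exact (d (i + 1)).hom ε) :
    IsProjResolution R X (fun k => P (descendingIndex i k))
      (fun k => d _ ≫ eqToHom (congrArg P (descendingIndex_succ_add_one i k)))
      (ModuleCat.ofHom ε) :=
  ⟨fun _ => hP _, hε, (LinearMap.exact_iff.1 hdε).symm,
    fun k => (LinearMap.exact_iff.1 (exact_comp_eqToHom hd
      (descendingIndex_succ_add_one i (k + 1)) (descendingIndex_succ_add_one i k))).symm⟩

theorem exists_comp_eq_of_extVanishSucc_zero (hP : ∀ i, Module.Projective R (P i))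
    (hd : ∀ i, Function.Exact (d i).hom (d (i + 1)).hom) {i : ℤ} {X Y : Type} [AddCommGroup X]
    [Module R X] [AddCommGroup Y] [Module R Y] (ε : P (i + 1 + 1) →ₗ[R] X)
    (hε : Function.Surjective ε) (hdε : Function.Exact (d (i + 1)).hom ε)
    (hX : ExtVanishSucc R X Y 0) (g : P (i + 1) →ₗ[R] Y) (hg : g ∘ₗ (d i).hom = 0) :
    ∃ h : P (i + 1 + 1) →ₗ[R] Y, h ∘ₗ (d (i + 1)).hom = g :=
  hX _ _ _ (isProjResolution_descendingIndex hP hd ε hε hdε) g hg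

end CompleteResolution

theorem statement18_general (Γ Λ : Type) [Ring Γ] [Ring Λ]
    (N : Type) [AddCommGroup N] [Module Γ N] [Module Λᵐᵒᵖ N] [SMulCommClass Γ Λᵐᵒᵖ N]
    (hN : Module.Projective Λᵐᵒᵖ N)
    (U : Type) [AddCommGroup U] [Module Λ U]
    (Q : ℤ → ModuleCat.{0} Λ) (dd : ∀ i, Q i ⟶ Q (i + 1))
    (hQex : ∀ i, LinearMap.range (dd i).hom = LinearMap.ker (dd (i + 1)).hom)
    (hUiso : Nonempty (U ≃ₗ[Λ] LinearMap.ker (dd 0).hom))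
    (hperp : ∀ i : ℤ, MemPerpRing Γ (BTensor Λ N ↥(LinearMap.ker (dd i).hom)))
    (hNQ : ∀ i, Module.Projective Γ (BTensor Λ N (Q i))) :
    IsGorensteinProj Γ (BTensor Λ N U) := by
  obtain ⟨e⟩ := hUiso
  have hQ (i : ℤ) : Function.Exact (dd i).hom (dd (i + 1)).hom :=
    LinearMap.exact_iff.2 (hQex i).symm
  let P (i : ℤ) : ModuleCat Γ := ModuleCat.of Γ (BTensor Λ N (Q i))
  let D (i : ℤ) : P i ⟶ P (i + 1) := ModuleCat.ofHom (BTensor.lTensor Γ N (dd i).hom)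
  have hD (i : ℤ) : Function.Exact (D i).hom (D (i + 1)).hom := BTensor.exact_lTensor hN (hQ i)
  refine ⟨P, D, hNQ, fun i => (LinearMap.exact_iff.1 (hD i)).symm,
    fun i g => ⟨fun hg => ?_, ?_⟩, ⟨?_⟩⟩
  · let c := (dd (i + 1 + 1)).hom.codRestrict (LinearMap.ker (dd (i + 1 + 1 + 1)).hom)
      (hQ _).apply_apply_eq_zero
    have hc : Function.Surjective c := fun ⟨y, hy⟩ => by
      obtain ⟨x, rfl⟩ := ((hQ _) y).1 hy
      exact ⟨x, rfl⟩
    have hdc : Function.Exact (dd (i + 1)).hom c :=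
      LinearMap.exact_iff.2 ((LinearMap.ker_codRestrict _ _ _).trans (hQex _).symm)
    exact exists_comp_eq_of_extVanishSucc_zero hNQ hD (BTensor.lTensor Γ N c)
      (BTensor.lTensor_surjective hc) (BTensor.exact_lTensor hN hdc) (hperp _ 0) g hg
  · rintro ⟨h, rfl⟩
    rw [LinearMap.comp_assoc, (hD i).linearMap_comp_eq_zero, LinearMap.comp_zero]
  · exact BTensor.lTensorEquivKer hN (Subtype.val_injective.comp e.injective)
      (LinearEquiv.precomp_exact_iff_exact.2 (LinearMap.exact_subtype_ker_map _))

/-- Let `N` be a `Γ`-`Λ`-bimodule, projective as a right `Λ`-module, and let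
`U` be a finitely generated Gorenstein projective left `Λ`-module with complete resolution
`Q⬝` and cycle modules `U^i = ker(dd i)`.  If `N ⊗_Λ U^i ∈ ^⊥Γ` for all `i` and each
`N ⊗_Λ Q^i` is a projective left `Γ`-module, then `N ⊗_Λ U` is a Gorenstein projective left
`Γ`-module. -/
theorem statement18 (k : Type) [Field k] (Γ Λ : Type) [Ring Γ] [Ring Λ]
    [Algebra k Γ] [Algebra k Λ] [FiniteDimensional k Γ] [FiniteDimensional k Λ]
    (N : Type) [AddCommGroup N] [Module Γ N] [Module Λᵐᵒᵖ N] [SMulCommClass Γ Λᵐᵒᵖ N]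
    (hN : Module.Projective Λᵐᵒᵖ N)
    (U : Type) [AddCommGroup U] [Module Λ U] (hUfg : Module.Finite Λ U)
    (Q : ℤ → ModuleCat.{0} Λ) (dd : ∀ i, Q i ⟶ Q (i + 1))
    (hQproj : ∀ i, Module.Projective Λ (Q i))
    (hQex : ∀ i, LinearMap.range (dd i).hom = LinearMap.ker (dd (i + 1)).hom)
    (hQdual : ∀ (i : ℤ) (g : Q (i + 1) →ₗ[Λ] Λ), g.comp (dd i).hom = 0 ↔
      ∃ h : Q (i + 1 + 1) →ₗ[Λ] Λ, h.comp (dd (i + 1)).hom = g)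
    (hUiso : Nonempty (U ≃ₗ[Λ] LinearMap.ker (dd 0).hom))
    (hperp : ∀ i : ℤ, MemPerpRing Γ (BTensor Λ N ↥(LinearMap.ker (dd i).hom)))
    (hNQ : ∀ i, Module.Projective Γ (BTensor Λ N (Q i))) :
    IsGorensteinProj Γ (BTensor Λ N U) :=
  statement18_general Γ Λ N hN U Q dd hQex hUiso hperp hNQ
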